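/- arXiv:math/0212203 — 2 statements merged into one kernel-verified Lean document; each statement's English description precedes it below -/
import Mathlib

section
/- With notation as in the monomial valuation setup, let $M\subset\mathbf{Z}^n$ be the group of integer solutions of $\sum_{i=1}^n y_iB_i=0$ and let $A_1,\ldots,A_{n-m}$ be a $\mathbf{Z}$-basis of $M$. Then the field $K_L$ of quotients of $L$-forms of equal $L$-degree equals $k(\mathbf{X}^{A_1},\ldots,\mathbf{X}^{A_{n-m}})$, the subfield of $k((X_1,\ldots,X_n))$ generated by the fractional monomials $\mathbf{X}^{A_j}$. -/
/-!
Clearing denominators by a monomial of the right degree: if `f` is `L`-homogeneous of degree `b`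
and `X^E` is any monomial of degree `b`, every term `c X^D` of `f` gives `c X^(D - E)` with
`D - E` a solution of the homogeneous system, hence a product of powers of the `X^{A_j}`. So
`f / g = (f / X^E) / (g / X^E)` lies in `k(X^{A_j})`. Conversely, writing a solution `y` as
`y⁺ - y⁻` exhibits `X^y = X^{y⁺} / X^{y⁻}` as a quotient of two monomials of the same degree, and
the quotients of forms of equal degree are closed under the field operations.
-/

/-- The `L`-degree of an exponent vector. -/
noncomputable def degL (m n : ℕ) (B : Fin n → (Fin m → ℕ)) (A : Fin n →₀ ℕ) :
    Fin m → ℤ :=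
  fun j => ∑ i, (A i : ℤ) * (B i j)

namespace MvPolynomial

section HomogeneousQuotientField

variable {R σ M : Type*} [CommRing R]

theorem algebraMap_fractionRing_ne_zero {p : MvPolynomial σ R} (hp : p ≠ 0) :
    algebraMap (MvPolynomial σ R) (FractionRing (MvPolynomial σ R)) p ≠ 0 :=
  (map_ne_zero_iff _ (IsFractionRing.injective _ _)).2 hp

variable [IsDomain R] [AddCommMonoid M]

variable (R) in
/-- The paper's `K_L` is the case `σ = Fin n`, `w i = B i`. -/
def homogeneousQuotientField (w : σ → M) : Subfield (FractionRing (MvPolynomial σ R)) where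
  carrier := {x | ∃ (b : M) (f g : MvPolynomial σ R), g ≠ 0 ∧
    IsWeightedHomogeneous w f b ∧ IsWeightedHomogeneous w g b ∧
    x = algebraMap _ (FractionRing (MvPolynomial σ R)) f / algebraMap _ _ g}
  one_mem' := ⟨0, 1, 1, one_ne_zero, isWeightedHomogeneous_one R w,
    isWeightedHomogeneous_one R w, by simp⟩
  zero_mem' := ⟨0, 0, 1, one_ne_zero, isWeightedHomogeneous_zero R w 0,
    isWeightedHomogeneous_one R w, by simp⟩
  mul_mem' := by
    rintro _ _ ⟨b, f, g, hg, hf, hgb, rfl⟩ ⟨c, f', g', hg', hf', hg'c, rfl⟩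
    exact ⟨b + c, f * f', g * g', mul_ne_zero hg hg', hf.mul hf', hgb.mul hg'c,
      by simp only [map_mul, div_mul_div_comm]⟩
  add_mem' := by
    rintro _ _ ⟨b, f, g, hg, hf, hgb, rfl⟩ ⟨c, f', g', hg', hf', hg'c, rfl⟩
    refine ⟨b + c, f * g' + g * f', g * g', mul_ne_zero hg hg',
      (hf.mul hg'c).add (add_comm c b ▸ hgb.mul hf'), hgb.mul hg'c, ?_⟩
    rw [div_add_div _ _ (algebraMap_fractionRing_ne_zero hg)
      (algebraMap_fractionRing_ne_zero hg')]
    simp only [map_add, map_mul]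
  neg_mem' := by
    rintro _ ⟨b, f, g, hg, hf, hgb, rfl⟩
    exact ⟨b, -f, g, hg, hf.neg, hgb, by rw [map_neg, neg_div]⟩
  inv_mem' := by
    rintro _ ⟨b, f, g, hg, hf, hgb, rfl⟩
    by_cases hf0 : f = 0
    · exact ⟨0, 0, 1, one_ne_zero, isWeightedHomogeneous_zero R w 0,
        isWeightedHomogeneous_one R w, by simp [hf0]⟩
    · exact ⟨b, g, f, hf0, hgb, hf, by rw [inv_div]⟩

theorem coe_homogeneousQuotientField_eq_union_zero (w : σ → M) :
    (homogeneousQuotientField R w : Set (FractionRing (MvPolynomial σ R))) =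
      {x | ∃ (b : M) (f g : MvPolynomial σ R), f ≠ 0 ∧ g ≠ 0 ∧
        IsWeightedHomogeneous w f b ∧ IsWeightedHomogeneous w g b ∧
        x = algebraMap _ (FractionRing (MvPolynomial σ R)) f / algebraMap _ _ g} ∪ {0} := by
  ext x
  constructor
  · rintro ⟨b, f, g, hg, hf, hgb, rfl⟩
    by_cases hf0 : f = 0
    · exact Or.inr (by simp [hf0])
    · exact Or.inl ⟨b, f, g, hf0, hg, hf, hgb, rfl⟩
  · rintro (⟨b, f, g, -, hg, hf, hgb, rfl⟩ | rfl)
    · exact ⟨b, f, g, hg, hf, hgb, rfl⟩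
    · exact (homogeneousQuotientField R w).zero_mem

theorem algebraMap_C_mem_homogeneousQuotientField (w : σ → M) (c : R) :
    algebraMap (MvPolynomial σ R) _ (C c) ∈ homogeneousQuotientField R w :=
  ⟨0, C c, 1, one_ne_zero, isWeightedHomogeneous_C w c, isWeightedHomogeneous_one R w,
    by rw [map_one, div_one]⟩

end HomogeneousQuotientField

section FracMonomial

variable {R σ : Type*} [CommRing R] [IsDomain R] [Fintype σ]

noncomputable def fracMonomial (y : σ → ℤ) : FractionRing (MvPolynomial σ R) :=
  ∏ i, algebraMap (MvPolynomial σ R) (FractionRing (MvPolynomial σ R)) (X i) ^ y i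

theorem fracMonomial_ne_zero (y : σ → ℤ) : fracMonomial (R := R) y ≠ 0 :=
  Finset.prod_ne_zero_iff.2 fun i _ =>
    zpow_ne_zero _ (algebraMap_fractionRing_ne_zero (X_ne_zero i))

@[simp]
theorem fracMonomial_zero : fracMonomial (R := R) (0 : σ → ℤ) = 1 := by
  simp [fracMonomial]

theorem fracMonomial_add (y z : σ → ℤ) :
    fracMonomial (R := R) (y + z) = fracMonomial y * fracMonomial z := by
  simp only [fracMonomial, ← Finset.prod_mul_distrib, Pi.add_apply]
  exact Finset.prod_congr rfl fun i _ =>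
    zpow_add₀ (algebraMap_fractionRing_ne_zero (X_ne_zero i)) _ _

theorem fracMonomial_sub (y z : σ → ℤ) :
    fracMonomial (R := R) (y - z) = fracMonomial y / fracMonomial z := by
  rw [eq_div_iff (fracMonomial_ne_zero z), ← fracMonomial_add, sub_add_cancel]

theorem fracMonomial_zsmul (c : ℤ) (y : σ → ℤ) :
    fracMonomial (R := R) (c • y) = fracMonomial y ^ c := by
  simp only [fracMonomial, ← Finset.prod_zpow, Pi.smul_apply, smul_eq_mul, mul_comm c, zpow_mul]

theorem algebraMap_monomial_one (d : σ →₀ ℕ) :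
    algebraMap (MvPolynomial σ R) (FractionRing (MvPolynomial σ R)) (monomial d 1) =
      fracMonomial fun i => (d i : ℤ) := by
  rw [← prod_X_pow_eq_monomial, map_prod, fracMonomial,
    Finset.prod_subset (Finset.subset_univ d.support) fun i _ hi => by
      simp [Finsupp.notMem_support_iff.1 hi]]
  simp only [map_pow, zpow_natCast]

theorem fracMonomial_mem_of_mem_span {ι : Type*} {A : ι → σ → ℤ}
    {F : Subfield (FractionRing (MvPolynomial σ R))} (hA : ∀ j, fracMonomial (A j) ∈ F)
    {y : σ → ℤ} (hy : y ∈ Submodule.span ℤ (Set.range A)) : fracMonomial y ∈ F := by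
  induction hy using Submodule.span_induction with
  | mem x hx => obtain ⟨j, rfl⟩ := hx; exact hA j
  | zero => rw [fracMonomial_zero]; exact F.one_mem
  | add y z _ _ hy hz => rw [fracMonomial_add]; exact F.mul_mem hy hz
  | smul c y _ hy => rw [fracMonomial_zsmul]; exact F.zpow_mem hy c

variable {M : Type*} [AddCommGroup M] (w : σ → M)

theorem weight_eq_sum_natCast_zsmul (d : σ →₀ ℕ) :
    Finsupp.weight w d = ∑ i, (d i : ℤ) • w i := by
  simp only [Finsupp.weight_eq_sum, natCast_zsmul]

theorem fracMonomial_mem_homogeneousQuotientField {y : σ → ℤ} (hy : ∑ i, y i • w i = 0) :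
    fracMonomial y ∈ homogeneousQuotientField R w := by
  set p : σ →₀ ℕ := Finsupp.equivFunOnFinite.symm fun i => (y i).toNat
  set q : σ →₀ ℕ := Finsupp.equivFunOnFinite.symm fun i => (-y i).toNat
  have hy_eq : y = (fun i => (p i : ℤ)) - fun i => (q i : ℤ) := by
    ext i
    exact (Int.toNat_sub_toNat_neg (y i)).symm
  have hpq : Finsupp.weight w p = Finsupp.weight w q := by
    rw [← sub_eq_zero, weight_eq_sum_natCast_zsmul, weight_eq_sum_natCast_zsmul,
      ← Finset.sum_sub_distrib, ← hy, hy_eq]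
    simp only [Pi.sub_apply, sub_smul]
  refine ⟨Finsupp.weight w q, monomial p 1, monomial q 1, monomial_eq_zero.not.2 one_ne_zero,
    isWeightedHomogeneous_monomial w p 1 hpq, isWeightedHomogeneous_monomial w q 1 rfl, ?_⟩
  rw [algebraMap_monomial_one, algebraMap_monomial_one, ← fracMonomial_sub, ← hy_eq]

theorem algebraMap_div_fracMonomial_mem {F : Subfield (FractionRing (MvPolynomial σ R))}
    (hC : ∀ c, algebraMap (MvPolynomial σ R) _ (C c) ∈ F)
    (hker : ∀ y : σ → ℤ, ∑ i, y i • w i = 0 → fracMonomial y ∈ F)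
    {f : MvPolynomial σ R} {b : M} (hf : IsWeightedHomogeneous w f b)
    {d : σ →₀ ℕ} (hd : Finsupp.weight w d = b) :
    algebraMap _ _ f / fracMonomial (fun i => (d i : ℤ)) ∈ F := by
  rw [f.as_sum, map_sum, Finset.sum_div]
  refine F.sum_mem fun e he => ?_
  have hterm : algebraMap _ (FractionRing (MvPolynomial σ R)) (monomial e (coeff e f)) =
      algebraMap (MvPolynomial σ R) _ (C (coeff e f)) * fracMonomial fun i => (e i : ℤ) := by
    rw [← algebraMap_monomial_one, ← map_mul, C_mul_monomial, mul_one]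
  rw [hterm, mul_div_assoc, ← fracMonomial_sub]
  refine F.mul_mem (hC _) (hker _ ?_)
  simp only [Pi.sub_apply, sub_smul, Finset.sum_sub_distrib, ← weight_eq_sum_natCast_zsmul,
    hf (mem_support_iff.1 he), hd, sub_self]

theorem homogeneousQuotientField_le {F : Subfield (FractionRing (MvPolynomial σ R))}
    (hC : ∀ c, algebraMap (MvPolynomial σ R) _ (C c) ∈ F)
    (hker : ∀ y : σ → ℤ, ∑ i, y i • w i = 0 → fracMonomial y ∈ F) :
    homogeneousQuotientField R w ≤ F := by
  rintro _ ⟨b, f, g, hg, hf, hgb, rfl⟩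
  obtain ⟨d, hd⟩ := support_nonempty.2 hg
  have hdb : Finsupp.weight w d = b := hgb (mem_support_iff.1 hd)
  rw [← div_div_div_cancel_right₀ (fracMonomial_ne_zero fun i => (d i : ℤ))]
  exact F.div_mem (algebraMap_div_fracMonomial_mem w hC hker hf hdb)
    (algebraMap_div_fracMonomial_mem w hC hker hgb hdb)

theorem homogeneousQuotientField_eq_closure {ι : Type*} (A : ι → σ → ℤ)
    (hA : ∀ j, ∑ i, A j i • w i = 0)
    (hspan : ∀ y : σ → ℤ, ∑ i, y i • w i = 0 → y ∈ Submodule.span ℤ (Set.range A)) :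
    homogeneousQuotientField R w = Subfield.closure
      (Set.range (fun j => fracMonomial (A j)) ∪
        Set.range fun c => algebraMap (MvPolynomial σ R) _ (C c)) := by
  refine le_antisymm (homogeneousQuotientField_le w ?_ ?_) (Subfield.closure_le.2 ?_)
  · exact fun c => Subfield.subset_closure (Or.inr ⟨c, rfl⟩)
  · exact fun y hy => fracMonomial_mem_of_mem_span
      (fun j => Subfield.subset_closure (Or.inl ⟨j, rfl⟩)) (hspan y hy)
  · exact Set.union_subset (Set.range_subset_iff.2 fun j =>
      fracMonomial_mem_homogeneousQuotientField w (hA j))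
      (Set.range_subset_iff.2 (algebraMap_C_mem_homogeneousQuotientField w))

end FracMonomial

end MvPolynomial

open MvPolynomial

theorem degL_eq_weight (m n : ℕ) (B : Fin n → Fin m → ℕ) (E : Fin n →₀ ℕ) :
    degL m n B E = Finsupp.weight (fun i j => (B i j : ℤ)) E := by
  ext j
  simp [degL, Finsupp.weight_eq_sum, Finset.sum_apply]

theorem forall_mem_support_degL_eq_iff {k : Type*} [CommSemiring k] (m n : ℕ)
    (B : Fin n → Fin m → ℕ) (f : MvPolynomial (Fin n) k) (b : Fin m → ℤ) :
    (∀ E ∈ f.support, degL m n B E = b) ↔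
      IsWeightedHomogeneous (fun i j => (B i j : ℤ)) f b := by
  simp only [IsWeightedHomogeneous, mem_support_iff, degL_eq_weight]

theorem KL_eq_field_of_fractional_monomials_general (k : Type*) [Field k] (m n : ℕ)
    (B : Fin n → (Fin m → ℕ))
    (A : Fin (n - m) → (Fin n → ℤ))
    (hAsol : ∀ j l, (∑ i, A j i * (B i l : ℤ)) = 0)
    (hAspan : ∀ y : Fin n → ℤ, (∀ l, (∑ i, y i * (B i l : ℤ)) = 0) →
      y ∈ Submodule.span ℤ (Set.range A))
    (S : Set (FractionRing (MvPolynomial (Fin n) k)))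
    (hS : S = {x | ∃ (b : Fin m → ℤ) (f g : MvPolynomial (Fin n) k), f ≠ 0 ∧ g ≠ 0 ∧
      (∀ E ∈ f.support, degL m n B E = b) ∧ (∀ E ∈ g.support, degL m n B E = b) ∧
      x = algebraMap (MvPolynomial (Fin n) k) (FractionRing (MvPolynomial (Fin n) k)) f /
        algebraMap (MvPolynomial (Fin n) k) (FractionRing (MvPolynomial (Fin n) k)) g}) :
    S ∪ {0} =
      ↑(Subfield.closure
        ((Set.range fun j : Fin (n - m) =>
          ∏ i, (algebraMap (MvPolynomial (Fin n) k) (FractionRing (MvPolynomial (Fin n) k))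
            (MvPolynomial.X i)) ^ (A j i)) ∪
         (Set.range fun c : k =>
          algebraMap (MvPolynomial (Fin n) k) (FractionRing (MvPolynomial (Fin n) k))
            (MvPolynomial.C c)))) := by
  set w : Fin n → Fin m → ℤ := fun i j => B i j
  have hsol (y : Fin n → ℤ) : ∑ i, y i • w i = 0 ↔ ∀ l, ∑ i, y i * (B i l : ℤ) = 0 := by
    simp [funext_iff, Finset.sum_apply, w]
  simp only [forall_mem_support_degL_eq_iff] at hS
  rw [hS, ← coe_homogeneousQuotientField_eq_union_zero,
    homogeneousQuotientField_eq_closure w A (fun j => (hsol _).2 (hAsol j))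
      (fun y hy => hAspan y ((hsol y).1 hy))]
  rfl

/-- The field `K_L` of quotients of `L`-forms of equal `L`-degree equals
`k(X^{A₁},…,X^{A_{n-m}})`, the subfield of `k((X₁,…,Xₙ))` generated over `k` by the
fractional monomials whose exponent vectors `A₁,…,A_{n-m}` form a `ℤ`-basis of the group
of solutions of `∑ yᵢBᵢ = 0`. -/
theorem KL_eq_field_of_fractional_monomials (k : Type*) [Field k] (m n : ℕ)
    (B : Fin n → (Fin m → ℕ)) (hB : ∀ i, B i ≠ 0)
    (hgen : AddSubgroup.closure (Set.range fun i => fun j => (B i j : ℤ)) = ⊤)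
    (A : Fin (n - m) → (Fin n → ℤ))
    (hAsol : ∀ j l, (∑ i, A j i * (B i l : ℤ)) = 0)
    (hAindep : LinearIndependent ℤ A)
    (hAspan : ∀ y : Fin n → ℤ, (∀ l, (∑ i, y i * (B i l : ℤ)) = 0) →
      y ∈ Submodule.span ℤ (Set.range A))
    (S : Set (FractionRing (MvPolynomial (Fin n) k)))
    (hS : S = {x | ∃ (b : Fin m → ℤ) (f g : MvPolynomial (Fin n) k), f ≠ 0 ∧ g ≠ 0 ∧
      (∀ E ∈ f.support, degL m n B E = b) ∧ (∀ E ∈ g.support, degL m n B E = b) ∧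
      x = algebraMap (MvPolynomial (Fin n) k) (FractionRing (MvPolynomial (Fin n) k)) f /
        algebraMap (MvPolynomial (Fin n) k) (FractionRing (MvPolynomial (Fin n) k)) g}) :
    S ∪ {0} =
      ↑(Subfield.closure
        ((Set.range fun j : Fin (n - m) =>
          ∏ i, (algebraMap (MvPolynomial (Fin n) k) (FractionRing (MvPolynomial (Fin n) k))
            (MvPolynomial.X i)) ^ (A j i)) ∪
         (Set.range fun c : k =>
          algebraMap (MvPolynomial (Fin n) k) (FractionRing (MvPolynomial (Fin n) k))
            (MvPolynomial.C c)))) :=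
  KL_eq_field_of_fractional_monomials_general k m n B A hAsol hAspan S hS
end

section
/- Let $v$ be a discrete rank two valuation of $K=k((X_1,X_2))$ with value group $\mathbf{Z}^2$ (lexicographically ordered), finite over $R=k[[X_1,X_2]]$ with center the maximal ideal. If $v(X_1)$ and $v(X_2)$ are $\mathbf{Z}$-linearly independent, then $\{v(X_1),v(X_2)\}$ is a basis of $\mathbf{Z}^2$ and $v$ is the monomial valuation associated to $\{v(X_1),v(X_2)\}$; in particular $v$ is zero-dimensional (its residue field is $k$). -/
noncomputable instance instLexGrp (m : ℕ) : IsOrderedCancelAddMonoid (Lex (Fin m → ℤ)) :=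
  inferInstance

noncomputable instance instLexLinOrd (m : ℕ) : LinearOrder (Lex (Fin m → ℤ)) :=
  @Pi.Lex.linearOrder (Fin m) (fun _ => ℤ) (inferInstanceAs (LinearOrder (Fin m)))
    (inferInstanceAs (WellFoundedLT (Fin m))) (fun _ => inferInstance)

noncomputable instance instLexMWZ (m : ℕ) :
    LinearOrderedCommMonoidWithZero (WithZero (Multiplicative (Lex (Fin m → ℤ)))) :=
  (inferInstance : LinearOrderedCommGroupWithZero
    (WithZero (Multiplicative (Lex (Fin m → ℤ))))).toLinearOrderedCommMonoidWithZero

noncomputable def expNeg (m : ℕ) (p : Lex (Fin m → ℤ)) :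
    WithZero (Multiplicative (Lex (Fin m → ℤ))) :=
  (Multiplicative.ofAdd (-p) : Multiplicative (Lex (Fin m → ℤ)))

/-!
Let `w(A) = ∑ Aᵢ bᵢ` be the weight of the monomial `X^A`, so that `v(X^A) = exp(-w(A))`.
As `v ≤ 1` on `R`, the value of `X^A` can only drop as `A` grows, and by Dickson's lemma the
support of `f ∈ R` has finitely many minimal exponents; hence `f` lies in the ideal they generate
and `v(f) < γ` as soon as `v(X^A) < γ` on the support of `f`. Linear independence makes `w`
injective, so the monomial of least weight of `f` strictly dominates all the others: `v` is the
monomial valuation. Every value of `v` is then `exp(w(B) - w(A))`, which shows that the `bᵢ`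
span `ℤ²`, and if `v(f/g) = 1` then `f` and `g` have the same leading exponent, so subtracting the
ratio of their leading coefficients from `f/g` lowers the value below `1`.
-/

open MvPowerSeries

theorem exists_finset_subset_forall_exists_le {α : Type*} [PartialOrder α]
    [WellQuasiOrderedLE α] (S : Set α) : ∃ M : Finset α, ↑M ⊆ S ∧ ∀ a ∈ S, ∃ m ∈ M, m ≤ a := by
  have hfin : {a | Minimal (· ∈ S) a}.Finite :=
    (setOfPred_minimal_antichain _).finite_of_wellQuasiOrdered wellQuasiOrdered_le
  refine ⟨hfin.toFinset, fun a ha => (hfin.mem_toFinset.mp ha).prop, fun a ha => ?_⟩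
  obtain ⟨m, hma, hm⟩ := (Set.isPWO_of_wellQuasiOrderedLE S).exists_le_minimal ha
  exact ⟨m, hfin.mem_toFinset.mpr hm, hma⟩

namespace Valuation

variable {R Γ₀ : Type*} [CommRing R] [LinearOrderedCommMonoidWithZero Γ₀] (v : Valuation R Γ₀)

theorem map_eq_one_of_isUnit (hv : ∀ r, v r ≤ 1) {u : R} (hu : IsUnit u) : v u = 1 := by
  obtain ⟨u, rfl⟩ := hu
  refine le_antisymm (hv u) ?_
  calc 1 = v u * v ↑u⁻¹ := by rw [← v.map_mul, u.mul_inv, v.map_one]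
    _ ≤ v u * 1 := mul_le_mul_right (hv _) _
    _ = v u := mul_one _

theorem map_lt_of_mem_span (hv : ∀ r, v r ≤ 1) {S : Set R} {γ : Γ₀} (hγ : 0 < γ)
    (hS : ∀ s ∈ S, v s < γ) {x : R} (hx : x ∈ Ideal.span S) : v x < γ := by
  induction hx using Submodule.span_induction with
  | mem s hs => exact hS s hs
  | zero => rwa [v.map_zero]
  | add x y _ _ hx hy => exact v.map_add_lt hx hy
  | smul a x _ hx =>
    calc v (a • x) = v a * v x := v.map_mul a x
      _ ≤ 1 * v x := mul_le_mul_left (hv a) _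
      _ < γ := by rwa [one_mul]

end Valuation

namespace MvPowerSeries

variable {σ R : Type*} [CommRing R]

theorem mem_span_monomial_one_of_forall_coeff_ne_zero (M : Finset (σ →₀ ℕ))
    {f : MvPowerSeries σ R} (hM : ∀ A, coeff A f ≠ 0 → ∃ m ∈ M, m ≤ A) :
    f ∈ Ideal.span ((monomial · 1) '' ↑M) := by
  classical
  induction M using Finset.induction_on generalizing f with
  | empty =>
    simp only [Finset.coe_empty, Set.image_empty, Ideal.span_empty, Ideal.mem_bot]
    ext A
    by_contra hA
    simpa using hM A hA
  | insert m₀ M _ ih =>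
    -- split off the terms divisible by `X ^ m₀`
    obtain ⟨q, hq⟩ : ∃ q : MvPowerSeries σ R, ∀ B, coeff B q = coeff (B + m₀) f :=
      ⟨fun B => coeff (B + m₀) f, fun _ => rfl⟩
    have hcoeff : ∀ A, coeff A (f - monomial m₀ 1 * q) = if m₀ ≤ A then 0 else coeff A f := by
      intro A
      rw [map_sub, coeff_monomial_mul, one_mul]
      split_ifs with h
      · rw [hq, tsub_add_cancel_of_le h, sub_self]
      · rw [sub_zero]
    have hrest : f - monomial m₀ 1 * q ∈ Ideal.span ((monomial · 1) '' ↑M) := by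
      refine ih fun A hA => ?_
      rw [hcoeff] at hA
      split_ifs at hA with h
      · exact absurd rfl hA
      obtain ⟨m, hm, hmA⟩ := hM A hA
      rcases Finset.mem_insert.mp hm with rfl | hm
      · exact absurd hmA h
      · exact ⟨m, hm, hmA⟩
    rw [← sub_add_cancel f (monomial m₀ 1 * q)]
    refine Ideal.add_mem _ (Ideal.span_mono ?_ hrest) (Ideal.mul_mem_right _ _ ?_)
    · exact Set.image_mono (by simp)
    · exact Ideal.subset_span ⟨m₀, by simp, rfl⟩

section

variable {Γ₀ : Type*} [LinearOrderedCommMonoidWithZero Γ₀]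
  (v : Valuation (MvPowerSeries σ R) Γ₀)

theorem valuation_monomial_one_antitone (hv : ∀ f, v f ≤ 1) :
    Antitone fun A : σ →₀ ℕ => v (monomial A 1) := by
  intro A B hAB
  calc v (monomial B 1) = v (monomial A 1) * v (monomial (B - A) 1) := by
        rw [← v.map_mul, monomial_mul_monomial, add_tsub_cancel_of_le hAB, mul_one]
    _ ≤ v (monomial A 1) * 1 := mul_le_mul_right (hv _) _
    _ = v (monomial A 1) := mul_one _

theorem valuation_monomial_of_isUnit (hv : ∀ f, v f ≤ 1) (A : σ →₀ ℕ) {c : R} (hc : IsUnit c) :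
    v (monomial A c) = v (monomial A 1) := by
  rw [← mul_one c, ← zero_add A, ← monomial_mul_monomial, v.map_mul, monomial_zero_eq_C_apply,
    v.map_eq_one_of_isUnit hv (hc.map C), one_mul, zero_add]

variable [Finite σ]

theorem valuation_lt_of_forall_coeff_ne_zero (hv : ∀ f, v f ≤ 1) {f : MvPowerSeries σ R}
    (hf : f ≠ 0) {γ : Γ₀} (hγ : ∀ A, coeff A f ≠ 0 → v (monomial A 1) < γ) : v f < γ := by
  obtain ⟨M, hMS, hM⟩ := exists_finset_subset_forall_exists_le {A | coeff A f ≠ 0}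
  obtain ⟨A, hA⟩ := (ne_zero_iff_exists_coeff_ne_zero f).mp hf
  refine v.map_lt_of_mem_span hv (zero_le.trans_lt (hγ A hA)) ?_
    (mem_span_monomial_one_of_forall_coeff_ne_zero M hM)
  rintro _ ⟨m, hm, rfl⟩
  exact hγ m (hMS hm)

theorem exists_coeff_ne_zero_forall_valuation_monomial_le (hv : ∀ f, v f ≤ 1)
    {f : MvPowerSeries σ R} (hf : f ≠ 0) :
    ∃ A, coeff A f ≠ 0 ∧ ∀ B, coeff B f ≠ 0 → v (monomial B 1) ≤ v (monomial A 1) := by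
  obtain ⟨M, hMS, hM⟩ := exists_finset_subset_forall_exists_le {A | coeff A f ≠ 0}
  obtain ⟨B, hB⟩ := (ne_zero_iff_exists_coeff_ne_zero f).mp hf
  obtain ⟨A, hAM, hAmax⟩ := M.exists_max_image (fun A => v (monomial A 1))
    (let ⟨m, hm, _⟩ := hM B hB; ⟨m, hm⟩)
  refine ⟨A, hMS hAM, fun B hB => ?_⟩
  obtain ⟨m, hm, hmB⟩ := hM B hB
  exact (valuation_monomial_one_antitone v hv hmB).trans (hAmax m hm)

end

section

variable {k Γ₀ : Type*} [Field k] [Finite σ] [LinearOrderedCommMonoidWithZero Γ₀]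
  (v : Valuation (MvPowerSeries σ k) Γ₀)

theorem valuation_eq_valuation_monomial_of_forall_le (hv : ∀ f, v f ≤ 1)
    (hinj : Function.Injective fun A : σ →₀ ℕ => v (monomial A 1))
    {f : MvPowerSeries σ k} {A : σ →₀ ℕ} (hA : coeff A f ≠ 0)
    (hmax : ∀ B, coeff B f ≠ 0 → v (monomial B 1) ≤ v (monomial A 1)) :
    v f = v (monomial A 1) := by
  set g := f - monomial A (coeff A f)
  have hlead : v (monomial A (coeff A f)) = v (monomial A 1) :=
    valuation_monomial_of_isUnit v hv A hA.isUnit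
  rcases eq_or_ne g 0 with hg | hg
  · rwa [sub_eq_zero.mp hg]
  have hgA : ∀ B, coeff B g ≠ 0 → v (monomial B 1) < v (monomial A 1) := by
    intro B hB
    have hBA : B ≠ A := by rintro rfl; simp [g] at hB
    simp only [g, map_sub, coeff_monomial_ne hBA, sub_zero] at hB
    exact (hmax B hB).lt_of_ne (hinj.ne hBA)
  calc v f = v (monomial A (coeff A f) + g) := by rw [add_sub_cancel]
    _ = v (monomial A 1) := by
      rw [v.map_add_eq_of_lt_left (hlead ▸ valuation_lt_of_forall_coeff_ne_zero v hv hg hgA), hlead]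

theorem exists_valuation_eq_valuation_monomial (hv : ∀ f, v f ≤ 1)
    (hinj : Function.Injective fun A : σ →₀ ℕ => v (monomial A 1))
    {f : MvPowerSeries σ k} (hf : f ≠ 0) : ∃ A, v f = v (monomial A 1) :=
  let ⟨A, hA, hmax⟩ := exists_coeff_ne_zero_forall_valuation_monomial_le v hv hf
  ⟨A, valuation_eq_valuation_monomial_of_forall_le v hv hinj hA hmax⟩

theorem exists_valuation_sub_C_mul_lt (hv : ∀ f, v f ≤ 1)
    (hinj : Function.Injective fun A : σ →₀ ℕ => v (monomial A 1))
    {f g : MvPowerSeries σ k} (hg : v g ≠ 0) (hfg : v f = v g) :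
    ∃ c, v (f - C c * g) < v g := by
  have hg0 : g ≠ 0 := by rintro rfl; exact hg v.map_zero
  have hf0 : f ≠ 0 := by rintro rfl; exact hg (hfg ▸ v.map_zero)
  obtain ⟨A, hA, hAmax⟩ := exists_coeff_ne_zero_forall_valuation_monomial_le v hv hf0
  obtain ⟨B, hB, hBmax⟩ := exists_coeff_ne_zero_forall_valuation_monomial_le v hv hg0
  have hvf := valuation_eq_valuation_monomial_of_forall_le v hv hinj hA hAmax
  have hvg := valuation_eq_valuation_monomial_of_forall_le v hv hinj hB hBmax
  obtain rfl : A = B := hinj (hvf.symm.trans (hfg.trans hvg))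
  refine ⟨coeff A f / coeff A g, ?_⟩
  set h := f - C (coeff A f / coeff A g) * g
  rcases eq_or_ne h 0 with hh | hh
  · rw [hh, v.map_zero]
    exact zero_lt_iff.mpr hg
  refine valuation_lt_of_forall_coeff_ne_zero v hv hh fun D hD => ?_
  have hcoeff : coeff D h = coeff D f - coeff A f / coeff A g * coeff D g := by
    simp only [h, map_sub, coeff_C_mul]
  have hDA : D ≠ A := by
    rintro rfl
    rw [hcoeff, div_mul_cancel₀ _ hB, sub_self] at hD
    exact hD rfl
  have hfg' : coeff D f ≠ 0 ∨ coeff D g ≠ 0 := by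
    by_contra! h0
    rw [hcoeff, h0.1, h0.2, mul_zero, sub_zero] at hD
    exact hD rfl
  rw [hvg]
  refine lt_of_le_of_ne ?_ (hinj.ne hDA)
  rcases hfg' with hDf | hDg
  · exact hAmax D hDf
  · exact hBmax D hDg

end

end MvPowerSeries

theorem WithZero.exp_sum {M ι : Type*} [AddCommMonoid M] (s : Finset ι) (f : ι → M) :
    WithZero.exp (∑ i ∈ s, f i) = ∏ i ∈ s, WithZero.exp (f i) := by
  induction s using Finset.cons_induction <;> simp [*]

theorem expNeg_eq_exp (m : ℕ) (p : Lex (Fin m → ℤ)) : expNeg m p = WithZero.exp (-p) := rfl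

theorem expNeg_injective (m : ℕ) : Function.Injective (expNeg m) :=
  WithZero.exp_injective.comp neg_injective

theorem expNeg_le_expNeg {m : ℕ} {p q : Lex (Fin m → ℤ)} : expNeg m p ≤ expNeg m q ↔ q ≤ p := by
  rw [expNeg_eq_exp, expNeg_eq_exp, WithZero.exp_le_exp, neg_le_neg_iff]

def lexWeight {σ : Type*} [Fintype σ] {m : ℕ} (b : σ → Fin m → ℤ) (A : σ →₀ ℕ) :
    Lex (Fin m → ℤ) :=
  toLex fun j => ∑ i, (A i : ℤ) * b i j

section

variable {σ : Type*} [Fintype σ] {m : ℕ} (b : σ → Fin m → ℤ)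

theorem ofLex_lexWeight (A : σ →₀ ℕ) : ofLex (lexWeight b A) = ∑ i, (A i : ℤ) • b i := by
  ext j
  simp [lexWeight]

theorem lexWeight_eq_sum (A : σ →₀ ℕ) : lexWeight b A = ∑ i, A i • toLex (b i) := by
  change toLex _ = toLex (∑ i, A i • b i)
  congr 1
  funext j
  simp [Finset.sum_apply]

theorem lexWeight_injective (hb : LinearIndependent ℤ b) : Function.Injective (lexWeight b) := by
  intro A B hAB
  have h := congrArg ofLex hAB
  rw [ofLex_lexWeight, ofLex_lexWeight] at h
  have := linearIndependent_iff_injective_fintypeLinearCombination.mp hb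
    (a₁ := fun i => (A i : ℤ)) (a₂ := fun i => (B i : ℤ))
    (by simpa only [Fintype.linearCombination_apply] using h)
  ext i
  exact_mod_cast congrFun this i

theorem ofLex_lexWeight_mem_span (A : σ →₀ ℕ) :
    ofLex (lexWeight b A) ∈ Submodule.span ℤ (Set.range b) := by
  rw [ofLex_lexWeight]
  exact Submodule.sum_mem _ fun i _ => Submodule.smul_mem _ _ (Submodule.subset_span ⟨i, rfl⟩)

end

namespace MvPowerSeries

variable {σ R : Type*} [Fintype σ] [CommRing R] {m : ℕ}
  (v : Valuation (MvPowerSeries σ R) (WithZero (Multiplicative (Lex (Fin m → ℤ)))))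
  {b : σ → Fin m → ℤ}

theorem valuation_monomial_one_eq_expNeg (hvX : ∀ i, v (X i) = expNeg m (toLex (b i)))
    (A : σ →₀ ℕ) : v (monomial A 1) = expNeg m (lexWeight b A) := by
  rw [monomial_one_eq, map_finsuppProd]
  simp only [map_pow]
  rw [Finsupp.prod_fintype _ _ fun _ => pow_zero _]
  simp only [hvX, expNeg_eq_exp, ← WithZero.exp_nsmul, ← WithZero.exp_sum, lexWeight_eq_sum]
  rw [← Finset.sum_neg_distrib]
  exact congrArg _ (Finset.sum_congr rfl fun i _ => neg_nsmul _ _)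

section

variable {σ k Γ₀ : Type*} [Finite σ] [Field k] [LinearOrderedCommGroupWithZero Γ₀]
  (v : Valuation (FractionRing (MvPowerSeries σ k)) Γ₀)

local notation "ι" => algebraMap (MvPowerSeries σ k) (FractionRing (MvPowerSeries σ k))

theorem exists_valuation_eq_div_monomial (hv : ∀ f, v (ι f) ≤ 1)
    (hinj : Function.Injective fun A : σ →₀ ℕ => v (ι (monomial A 1)))
    {x : FractionRing (MvPowerSeries σ k)} (hx : x ≠ 0) :
    ∃ A B : σ →₀ ℕ, v x = v (ι (monomial A 1)) / v (ι (monomial B 1)) := by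
  obtain ⟨f, g, hg, rfl⟩ := IsFractionRing.div_surjective (A := MvPowerSeries σ k) x
  have hf : f ≠ 0 := by rintro rfl; simp at hx
  obtain ⟨A, hA⟩ := exists_valuation_eq_valuation_monomial (v.comap ι) hv hinj hf
  obtain ⟨B, hB⟩ :=
    exists_valuation_eq_valuation_monomial (v.comap ι) hv hinj (nonZeroDivisors.ne_zero hg)
  exact ⟨A, B, by rw [v.map_div, ← v.comap_apply, hA, ← v.comap_apply, hB]; rfl⟩

theorem exists_valuation_sub_algebraMap_C_lt_one (hv : ∀ f, v (ι f) ≤ 1)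
    (hinj : Function.Injective fun A : σ →₀ ℕ => v (ι (monomial A 1)))
    {x : FractionRing (MvPowerSeries σ k)} (hx : v x = 1) : ∃ c : k, v (x - ι (C c)) < 1 := by
  obtain ⟨f, g, hg, rfl⟩ := IsFractionRing.div_surjective (A := MvPowerSeries σ k) x
  have hg0 : ι g ≠ 0 := IsFractionRing.to_map_ne_zero_of_mem_nonZeroDivisors hg
  have hvg : v (ι g) ≠ 0 := (v.ne_zero_iff).mpr hg0
  obtain ⟨c, hc⟩ := exists_valuation_sub_C_mul_lt (v.comap ι) hv hinj (f := f) hvg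
    (by rwa [v.map_div, div_eq_one_iff_eq hvg] at hx)
  refine ⟨c, ?_⟩
  have : ι f / ι g - ι (C c) = ι (f - C c * g) / ι g := by
    rw [map_sub, map_mul, sub_div, mul_div_cancel_right₀ _ hg0]
  rwa [this, v.map_div, div_lt_one₀ (zero_lt_iff.mpr hvg)]

end

end MvPowerSeries

theorem rank_two_valuation_with_independent_values_is_monomial_general (k : Type*) [Field k]
    (v : Valuation (FractionRing (MvPowerSeries (Fin 2) k))
      (WithZero (Multiplicative (Lex (Fin 2 → ℤ)))))
    (hsurj : ∀ γ, ∃ x, v x = γ)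
    (hRv : ∀ f : MvPowerSeries (Fin 2) k,
      v (algebraMap (MvPowerSeries (Fin 2) k) (FractionRing (MvPowerSeries (Fin 2) k)) f) ≤ 1)
    (b : Fin 2 → (Fin 2 → ℤ))
    (hvX : ∀ i, v (algebraMap (MvPowerSeries (Fin 2) k)
      (FractionRing (MvPowerSeries (Fin 2) k)) (MvPowerSeries.X i)) = expNeg 2 (toLex (b i)))
    (hindep : LinearIndependent ℤ b) :
    Submodule.span ℤ (Set.range b) = ⊤ ∧
    (∀ f : MvPowerSeries (Fin 2) k, f ≠ 0 → ∀ p : Lex (Fin 2 → ℤ),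
      IsLeast ((fun A : Fin 2 →₀ ℕ => toLex fun j => ∑ i, (A i : ℤ) * b i j) ''
        {A | MvPowerSeries.coeff A f ≠ 0}) p →
      v (algebraMap (MvPowerSeries (Fin 2) k) (FractionRing (MvPowerSeries (Fin 2) k)) f) =
        expNeg 2 p) ∧
    (∀ x : FractionRing (MvPowerSeries (Fin 2) k), v x = 1 →
      ∃ c : k, v (x - algebraMap (MvPowerSeries (Fin 2) k)
        (FractionRing (MvPowerSeries (Fin 2) k)) ((MvPowerSeries.C (σ := Fin 2) c))) < 1) := by
  set ι := algebraMap (MvPowerSeries (Fin 2) k) (FractionRing (MvPowerSeries (Fin 2) k))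
  have hw : ∀ A, v (ι (monomial A 1)) = expNeg 2 (lexWeight b A) :=
    valuation_monomial_one_eq_expNeg (v.comap ι) hvX
  have hinj : Function.Injective fun A => v (ι (monomial A 1)) := fun A B hAB =>
    lexWeight_injective b hindep (expNeg_injective 2 (by simpa only [hw] using hAB))
  refine ⟨Submodule.eq_top_iff'.mpr fun q => ?_, fun f _ p hp => ?_,
    fun x hx => exists_valuation_sub_algebraMap_C_lt_one v hRv hinj hx⟩
  · obtain ⟨x, hx⟩ := hsurj (expNeg 2 (toLex q))
    obtain ⟨A, B, hAB⟩ := exists_valuation_eq_div_monomial v hRv hinj (x := x)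
      (by rintro rfl; exact WithZero.exp_ne_zero (v.map_zero ▸ hx).symm)
    rw [hx, hw, hw, expNeg_eq_exp, expNeg_eq_exp, expNeg_eq_exp, ← WithZero.exp_sub,
      WithZero.exp_inj] at hAB
    have hq : toLex q = lexWeight b A - lexWeight b B := neg_injective (hAB.trans (by abel))
    rw [show q = ofLex (lexWeight b A) - ofLex (lexWeight b B) from congrArg ofLex hq]
    exact sub_mem (ofLex_lexWeight_mem_span b A) (ofLex_lexWeight_mem_span b B)
  · change IsLeast (lexWeight b '' _) p at hp
    obtain ⟨A, hA, rfl⟩ := hp.1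
    rw [← hw]
    exact valuation_eq_valuation_monomial_of_forall_le (v.comap ι) hRv hinj hA fun B hB => by
      simpa only [Valuation.comap_apply, hw, expNeg_le_expNeg] using hp.2 ⟨B, hB, rfl⟩

/-- A discrete rank two valuation `v` of `K = k((X₁,X₂))` with value group `ℤ²` (lex),
finite over `R = k[[X₁,X₂]]` and centered at its maximal ideal, such that `v(X₁)` and
`v(X₂)` are `ℤ`-linearly independent: then `{v(X₁), v(X₂)}` is a basis of `ℤ²`, `v` is
the monomial valuation associated to `{v(X₁), v(X₂)}`, and `v` is zero-dimensional (its
residue field is `k`). -/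
theorem rank_two_valuation_with_independent_values_is_monomial (k : Type*) [Field k]
    [IsAlgClosed k]
    (v : Valuation (FractionRing (MvPowerSeries (Fin 2) k))
      (WithZero (Multiplicative (Lex (Fin 2 → ℤ)))))
    (hsurj : ∀ γ, ∃ x, v x = γ)
    (hRv : ∀ f : MvPowerSeries (Fin 2) k,
      v (algebraMap (MvPowerSeries (Fin 2) k) (FractionRing (MvPowerSeries (Fin 2) k)) f) ≤ 1)
    (hcenter : ∀ f : MvPowerSeries (Fin 2) k,
      v (algebraMap (MvPowerSeries (Fin 2) k) (FractionRing (MvPowerSeries (Fin 2) k)) f) < 1 ↔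
        MvPowerSeries.constantCoeff f = 0)
    (b : Fin 2 → (Fin 2 → ℤ))
    (hvX : ∀ i, v (algebraMap (MvPowerSeries (Fin 2) k)
      (FractionRing (MvPowerSeries (Fin 2) k)) (MvPowerSeries.X i)) = expNeg 2 (toLex (b i)))
    (hindep : LinearIndependent ℤ b) :
    Submodule.span ℤ (Set.range b) = ⊤ ∧
    (∀ f : MvPowerSeries (Fin 2) k, f ≠ 0 → ∀ p : Lex (Fin 2 → ℤ),
      IsLeast ((fun A : Fin 2 →₀ ℕ => toLex fun j => ∑ i, (A i : ℤ) * b i j) ''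
        {A | MvPowerSeries.coeff A f ≠ 0}) p →
      v (algebraMap (MvPowerSeries (Fin 2) k) (FractionRing (MvPowerSeries (Fin 2) k)) f) =
        expNeg 2 p) ∧
    (∀ x : FractionRing (MvPowerSeries (Fin 2) k), v x = 1 →
      ∃ c : k, v (x - algebraMap (MvPowerSeries (Fin 2) k)
        (FractionRing (MvPowerSeries (Fin 2) k)) ((MvPowerSeries.C (σ := Fin 2) c))) < 1) :=
  rank_two_valuation_with_independent_values_is_monomial_general k v hsurj hRv b hvX hindep
end
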